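/- arXiv:2502.15415 — 4 statements merged into one kernel-verified Lean document; each statement's English description precedes it below -/
import Mathlib

section
/- Let k ≥ 1, let P, Q, R, S be Hermitian positive definite k×k complex matrices that commute pairwise, and let φ, ψ, η, ξ, a, b > 0 be real numbers. Then the generalized beta-logarithmic matrix function is symmetric in the sense that BL_{(φ,ψ)}^{(R,S,η,ξ)}(a,b;P,Q) = BL_{(φ,ψ)}^{(S,R,ξ,η)}(b,a;Q,P). -/
open MeasureTheory Real
open scoped Matrix.Norms.L2Operator ComplexOrder

noncomputable section

/-- For a real `t > 0` and a square complex matrix `A`, `t ^ A := exp (A · log t)`. -/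
def mpow {k : ℕ} (t : ℝ) (A : Matrix (Fin k) (Fin k) ℂ) : Matrix (Fin k) (Fin k) ℂ :=
  NormedSpace.exp ((Real.log t : ℂ) • A)

/-- The two-parameter matrix Mittag-Leffler function `E_{φ,ψ}(A) = ∑ Aⁿ / Γ(φn + ψ)`. -/
def mittagLeffler {k : ℕ} (φ ψ : ℝ) (A : Matrix (Fin k) (Fin k) ℂ) :
    Matrix (Fin k) (Fin k) ℂ :=
  ∑' n : ℕ, (Real.Gamma (φ * n + ψ))⁻¹ • A ^ n

/-- The integrand of the generalized beta-logarithmic matrix function: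
`a^{1-x} b^x · x^{P-I} (1-x)^{Q-I} E_{φ,ψ}(−R x^{−η}) E_{φ,ψ}(−S (1−x)^{−ξ})`. -/
def gblKernel {k : ℕ} (φ ψ η ξ : ℝ) (R S : Matrix (Fin k) (Fin k) ℂ) (a b : ℝ)
    (P Q : Matrix (Fin k) (Fin k) ℂ) (x : ℝ) : Matrix (Fin k) (Fin k) ℂ :=
  (a ^ (1 - x) * b ^ x : ℝ) •
    (mpow x (P - 1) * mpow (1 - x) (Q - 1) *
      mittagLeffler φ ψ ((-(x ^ (-η)) : ℝ) • R) *
      mittagLeffler φ ψ ((-((1 - x) ^ (-ξ)) : ℝ) • S))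

/-- The generalized beta-logarithmic matrix function `BL_{(φ,ψ)}^{(R,S,η,ξ)}(a,b;P,Q)`. -/
def GBL {k : ℕ} (φ ψ η ξ : ℝ) (R S : Matrix (Fin k) (Fin k) ℂ) (a b : ℝ)
    (P Q : Matrix (Fin k) (Fin k) ℂ) : Matrix (Fin k) (Fin k) ℂ :=
  ∫ x in Set.Ioo (0 : ℝ) 1, gblKernel φ ψ η ξ R S a b P Q x

/-- The generalized beta matrix function `B_{(φ,ψ)}^{(R,S,η,ξ)}(P,Q) = BL(1,1;P,Q)`. -/
def GB {k : ℕ} (φ ψ η ξ : ℝ) (R S : Matrix (Fin k) (Fin k) ℂ)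
    (P Q : Matrix (Fin k) (Fin k) ℂ) : Matrix (Fin k) (Fin k) ℂ :=
  GBL φ ψ η ξ R S 1 1 P Q

/-!
The substitution `x ↦ 1 - x` maps `(0, 1)` onto itself and carries the integrand of the
right-hand side to that of the left-hand side: it swaps `a^{1-x} b^x` with `b^{1-x} a^x`,
and the remaining four matrix factors only change order. The power factors are exponentials
of multiples of `P - I` and `Q - I`, and the Mittag-Leffler factors are power series in
multiples of `R` and `S`, so `[P, Q] = 0` and `[R, S] = 0` suffice to reorder them.
-/

section Commute

variable {k : ℕ} {A B : Matrix (Fin k) (Fin k) ℂ}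

theorem Commute.mpow_right (h : Commute A B) (t : ℝ) : Commute A (mpow t B) :=
  (h.smul_right _).exp_right

theorem Commute.mpow (h : Commute A B) (t s : ℝ) : Commute (mpow t A) (mpow s B) :=
  ((h.symm.mpow_right t).symm.smul_right _).exp_right

theorem Commute.mittagLeffler_right (h : Commute A B) (φ ψ : ℝ) :
    Commute A (mittagLeffler φ ψ B) :=
  Commute.tsum_right _ fun n => (h.pow_right n).smul_right _

theorem Commute.mittagLeffler (h : Commute A B) (φ ψ φ' ψ' : ℝ) :
    Commute (mittagLeffler φ ψ A) (mittagLeffler φ' ψ' B) :=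
  ((h.symm.mittagLeffler_right φ ψ).symm).mittagLeffler_right φ' ψ'

end Commute

theorem setIntegral_Ioo_zero_one_comp_one_sub {E : Type*} [NormedAddCommGroup E]
    [NormedSpace ℝ E] (f : ℝ → E) :
    ∫ x in Set.Ioo (0 : ℝ) 1, f (1 - x) = ∫ x in Set.Ioo (0 : ℝ) 1, f x := by
  simpa [← integral_Ioc_eq_integral_Ioo, intervalIntegral.integral_of_le zero_le_one]
    using intervalIntegral.integral_comp_sub_left f (1 : ℝ) (a := 0) (b := 1)

theorem gblKernel_eq_gblKernel_one_sub {k : ℕ} {P Q R S : Matrix (Fin k) (Fin k) ℂ}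
    (hPQ : Commute P Q) (hRS : Commute R S) (φ ψ η ξ a b x : ℝ) :
    gblKernel φ ψ η ξ R S a b P Q x = gblKernel φ ψ ξ η S R b a Q P (1 - x) := by
  have hpow : Commute (mpow x (P - 1)) (mpow (1 - x) (Q - 1)) :=
    ((hPQ.sub_left (Commute.one_left Q)).sub_right (Commute.one_right _)).mpow _ _
  have hml : Commute (mittagLeffler φ ψ ((-(x ^ (-η)) : ℝ) • R))
      (mittagLeffler φ ψ ((-((1 - x) ^ (-ξ)) : ℝ) • S)) :=
    ((hRS.smul_left _).smul_right _).mittagLeffler _ _ _ _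
  rw [gblKernel, gblKernel, sub_sub_cancel, mul_comm (a ^ (1 - x)), hpow.eq, mul_assoc,
    hml.eq, ← mul_assoc]

theorem GBL_symm_general {k : ℕ} (P Q R S : Matrix (Fin k) (Fin k) ℂ)
    (hPQ : Commute P Q) (hRS : Commute R S)
    (φ ψ η ξ a b : ℝ) :
    GBL φ ψ η ξ R S a b P Q = GBL φ ψ ξ η S R b a Q P := by
  simp only [GBL, gblKernel_eq_gblKernel_one_sub hPQ hRS φ ψ η ξ a b]
  exact setIntegral_Ioo_zero_one_comp_one_sub _

theorem GBL_symm {k : ℕ} (hk : 1 ≤ k) (P Q R S : Matrix (Fin k) (Fin k) ℂ)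
    (hP : P.PosDef) (hQ : Q.PosDef) (hR : R.PosDef) (hS : S.PosDef)
    (hPQ : Commute P Q) (hPR : Commute P R) (hPS : Commute P S)
    (hQR : Commute Q R) (hQS : Commute Q S) (hRS : Commute R S)
    (φ ψ η ξ a b : ℝ) (hφ : 0 < φ) (hψ : 0 < ψ) (hη : 0 < η) (hξ : 0 < ξ)
    (ha : 0 < a) (hb : 0 < b)
    (hInt : IntegrableOn (gblKernel φ ψ η ξ R S a b P Q) (Set.Ioo 0 1))
    (hInt' : IntegrableOn (gblKernel φ ψ ξ η S R b a Q P) (Set.Ioo 0 1)) :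
    GBL φ ψ η ξ R S a b P Q = GBL φ ψ ξ η S R b a Q P :=
  GBL_symm_general P Q R S hPQ hRS φ ψ η ξ a b

end
end

section
/- Let k ≥ 1, let P, Q, R, S be Hermitian positive definite k×k complex matrices, and let φ, ψ, η, ξ, a, b > 0 be real numbers. Then the generalized beta-logarithmic matrix function satisfies the recurrence BL_{(φ,ψ)}^{(R,S,η,ξ)}(a,b;P+I,Q) + BL_{(φ,ψ)}^{(R,S,η,ξ)}(a,b;P,Q+I) = BL_{(φ,ψ)}^{(R,S,η,ξ)}(a,b;P,Q). -/
open MeasureTheory Real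
open scoped Matrix.Norms.L2Operator ComplexOrder

noncomputable section

theorem mpow_add_one {k : ℕ} {t : ℝ} (ht : 0 < t) (A : Matrix (Fin k) (Fin k) ℂ) :
    mpow t (A + 1) = (t : ℂ) • mpow t A := by
  have hcomm : Commute ((Real.log t : ℂ) • A) (algebraMap ℂ _ (Real.log t : ℂ)) :=
    Algebra.commutes _ _ |>.symm
  have hscalar : NormedSpace.exp (algebraMap ℂ (Matrix (Fin k) (Fin k) ℂ) (Real.log t : ℂ)) =
      (t : ℂ) • 1 := by
    rw [← NormedSpace.algebraMap_exp_comm, ← Complex.exp_eq_exp_ℂ, ← Complex.ofReal_exp,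
      Real.exp_log ht, Algebra.algebraMap_eq_smul_one]
  rw [mpow, mpow, smul_add, ← Algebra.algebraMap_eq_smul_one,
    Matrix.exp_add_of_commute _ _ hcomm, hscalar, mul_smul_one]

section Kernel

variable {k : ℕ} (φ ψ η ξ : ℝ) (R S : Matrix (Fin k) (Fin k) ℂ) (a b : ℝ)
  (P Q : Matrix (Fin k) (Fin k) ℂ)

theorem gblKernel_add_one_left {x : ℝ} (hx : 0 < x) :
    gblKernel φ ψ η ξ R S a b (P + 1) Q x = (x : ℂ) • gblKernel φ ψ η ξ R S a b P Q x := by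
  have h : mpow x (P + 1 - 1) = (x : ℂ) • mpow x (P - 1) := by
    rw [← mpow_add_one hx, sub_add_cancel, add_sub_cancel_right]
  simp only [gblKernel, h, smul_mul_assoc]
  rw [smul_comm]

theorem gblKernel_add_one_right {x : ℝ} (hx : x < 1) :
    gblKernel φ ψ η ξ R S a b P (Q + 1) x =
      ((1 - x : ℝ) : ℂ) • gblKernel φ ψ η ξ R S a b P Q x := by
  have h : mpow (1 - x) (Q + 1 - 1) = ((1 - x : ℝ) : ℂ) • mpow (1 - x) (Q - 1) := by
    rw [← mpow_add_one (sub_pos.mpr hx), sub_add_cancel, add_sub_cancel_right]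
  simp only [gblKernel, h, mul_smul_comm, smul_mul_assoc]
  rw [smul_comm]

theorem gblKernel_add_one_left_add_add_one_right {x : ℝ} (hx : x ∈ Set.Ioo 0 1) :
    gblKernel φ ψ η ξ R S a b (P + 1) Q x + gblKernel φ ψ η ξ R S a b P (Q + 1) x =
      gblKernel φ ψ η ξ R S a b P Q x := by
  rw [gblKernel_add_one_left _ _ _ _ _ _ _ _ _ _ hx.1,
    gblKernel_add_one_right _ _ _ _ _ _ _ _ _ _ hx.2, ← add_smul]
  norm_num

end Kernel

theorem GBL_recurrence_general {k : ℕ} (P Q R S : Matrix (Fin k) (Fin k) ℂ)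
    (φ ψ η ξ a b : ℝ)
    (hInt : ∀ m n : ℕ, IntegrableOn
      (gblKernel φ ψ η ξ R S a b (P + m • (1 : Matrix (Fin k) (Fin k) ℂ))
        (Q + n • (1 : Matrix (Fin k) (Fin k) ℂ))) (Set.Ioo 0 1)) :
    GBL φ ψ η ξ R S a b (P + 1) Q + GBL φ ψ η ξ R S a b P (Q + 1) =
      GBL φ ψ η ξ R S a b P Q := by
  have hleft : IntegrableOn (gblKernel φ ψ η ξ R S a b (P + 1) Q) (Set.Ioo 0 1) := by
    simpa using hInt 1 0
  have hright : IntegrableOn (gblKernel φ ψ η ξ R S a b P (Q + 1)) (Set.Ioo 0 1) := by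
    simpa using hInt 0 1
  rw [GBL, GBL, GBL, ← integral_add hleft hright]
  exact setIntegral_congr_fun measurableSet_Ioo fun x hx =>
    gblKernel_add_one_left_add_add_one_right φ ψ η ξ R S a b P Q hx

theorem GBL_recurrence {k : ℕ} (hk : 1 ≤ k) (P Q R S : Matrix (Fin k) (Fin k) ℂ)
    (hP : P.PosDef) (hQ : Q.PosDef) (hR : R.PosDef) (hS : S.PosDef)
    (φ ψ η ξ a b : ℝ) (hφ : 0 < φ) (hψ : 0 < ψ) (hη : 0 < η) (hξ : 0 < ξ)
    (ha : 0 < a) (hb : 0 < b)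
    (hInt : ∀ m n : ℕ, IntegrableOn
      (gblKernel φ ψ η ξ R S a b (P + m • (1 : Matrix (Fin k) (Fin k) ℂ))
        (Q + n • (1 : Matrix (Fin k) (Fin k) ℂ))) (Set.Ioo 0 1)) :
    GBL φ ψ η ξ R S a b (P + 1) Q + GBL φ ψ η ξ R S a b P (Q + 1) =
      GBL φ ψ η ξ R S a b P Q :=
  GBL_recurrence_general P Q R S φ ψ η ξ a b hInt
end
end

section
/- Let k ≥ 1, let P, Q, R, S be Hermitian positive definite k×k complex matrices, and let φ, ψ, η, ξ, a, b > 0 be real numbers. Then the generalized beta-logarithmic matrix function admits the infinite-sum representation BL_{(φ,ψ)}^{(R,S,η,ξ)}(a,b;P,Q) = ∑_{n=0}^∞ BL_{(φ,ψ)}^{(R,S,η,ξ)}(a,b;P+nI,Q+I), the series converging in the space of k×k complex matrices. -/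
open MeasureTheory Real
open scoped Matrix.Norms.L2Operator ComplexOrder

noncomputable section

/-!
For `0 < x < 1`, raising `P` by `n • 1` and `Q` by `1` multiplies the kernel by the scalar
`x ^ n * (1 - x)`, since `t ^ (A + n • 1) = t ^ n • t ^ A`. These nonnegative weights sum to `1`
(geometric series), so the series of the norms of the shifted kernels integrates to the integral
of the norm of the original kernel, which is finite; hence sum and integral may be interchanged.
-/

open scoped ENNReal

theorem integral_eq_tsum_integral_smul_of_hasSum_one {α E : Type*} [MeasurableSpace α]
    {μ : Measure α} [NormedAddCommGroup E] [NormedSpace ℝ E] {g : α → E} {w : ℕ → α → ℝ}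
    (hg : Integrable g μ) (hw : ∀ n, AEStronglyMeasurable (w n) μ)
    (hw_nonneg : ∀ᵐ x ∂μ, ∀ n, 0 ≤ w n x) (hw_sum : ∀ᵐ x ∂μ, HasSum (fun n ↦ w n x) 1) :
    ∫ x, g x ∂μ = ∑' n, ∫ x, w n x • g x ∂μ := by
  have hmeas : ∀ n, AEStronglyMeasurable (fun x ↦ w n x • g x) μ :=
    fun n ↦ (hw n).smul hg.1
  have hnorm : ∀ᵐ x ∂μ, ∑' n, ‖w n x • g x‖ₑ = ‖g x‖ₑ := by
    filter_upwards [hw_nonneg, hw_sum] with x hx_nonneg hx_sum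
    simp only [enorm_smul, Real.enorm_eq_ofReal (hx_nonneg _), ENNReal.tsum_mul_right,
      ← ENNReal.ofReal_tsum_of_nonneg hx_nonneg hx_sum.summable, hx_sum.tsum_eq,
      ENNReal.ofReal_one, one_mul]
  have hfin : ∑' n, ∫⁻ x, ‖w n x • g x‖ₑ ∂μ ≠ ∞ := by
    rw [← lintegral_tsum fun n ↦ (hmeas n).enorm, lintegral_congr_ae hnorm]
    exact hg.2.ne
  rw [← integral_tsum hmeas hfin]
  refine integral_congr_ae ?_
  filter_upwards [hw_sum] with x hx_sum
  rw [(hx_sum.smul_const (g x)).tsum_eq, one_smul]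

theorem hasSum_pow_mul_one_sub {x : ℝ} (h₀ : 0 ≤ x) (h₁ : x < 1) :
    HasSum (fun n : ℕ ↦ x ^ n * (1 - x)) 1 := by
  simpa [inv_mul_cancel₀ (sub_ne_zero.2 h₁.ne')] using
    (hasSum_geometric_of_lt_one h₀ h₁).mul_right (1 - x)

theorem NormedSpace.exp_smul_one {𝔸 : Type*} [NormedRing 𝔸] [NormedAlgebra ℂ 𝔸] (c : ℂ) :
    NormedSpace.exp (c • (1 : 𝔸)) = Complex.exp c • 1 := by
  rw [← Algebra.algebraMap_eq_smul_one, ← NormedSpace.algebraMap_exp_comm,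
    Algebra.algebraMap_eq_smul_one, Complex.exp_eq_exp_ℂ]

theorem mpow_add_nsmul_one {k : ℕ} {t : ℝ} (ht : 0 < t) (A : Matrix (Fin k) (Fin k) ℂ) (n : ℕ) :
    mpow t (A + n • 1) = ((t : ℂ) ^ n) • mpow t A := by
  have hcomm : Commute ((Real.log t : ℂ) • A) (((Real.log t : ℂ) * n) • 1) :=
    ((Commute.one_right A).smul_right _).smul_left _
  have hpow : Complex.exp ((Real.log t : ℂ) * n) = (t : ℂ) ^ n := by
    rw [mul_comm, Complex.exp_nat_mul, ← Complex.ofReal_exp, Real.exp_log ht]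
  rw [mpow, ← Nat.cast_smul_eq_nsmul ℂ, smul_add, smul_smul,
    Matrix.exp_add_of_commute _ _ hcomm, NormedSpace.exp_smul_one, hpow, Matrix.mul_smul, mul_one,
    mpow]

theorem gblKernel_add_nsmul_one_add_one {k : ℕ} (φ ψ η ξ : ℝ) (R S : Matrix (Fin k) (Fin k) ℂ)
    (a b : ℝ) (P Q : Matrix (Fin k) (Fin k) ℂ) (n : ℕ) {x : ℝ} (hx : x ∈ Set.Ioo (0 : ℝ) 1) :
    gblKernel φ ψ η ξ R S a b (P + n • 1) (Q + 1) x
      = (x ^ n * (1 - x)) • gblKernel φ ψ η ξ R S a b P Q x := by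
  have hP : mpow x (P + n • 1 - 1) = ((x : ℂ) ^ n) • mpow x (P - 1) := by
    rw [add_sub_right_comm, mpow_add_nsmul_one hx.1]
  have hQ : mpow (1 - x) (Q + 1 - 1) = ((1 - x : ℝ) : ℂ) • mpow (1 - x) (Q - 1) := by
    have h := mpow_add_nsmul_one (sub_pos.2 hx.2) (Q - 1) 1
    rw [one_nsmul, sub_add_cancel, pow_one] at h
    rwa [add_sub_cancel_right]
  simp only [gblKernel, hP, hQ, Matrix.smul_mul, Matrix.mul_smul, smul_smul,
    ← Complex.coe_smul]
  congr 1
  push_cast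
  ring

theorem GBL_infinite_sum_left_general {k : ℕ} (P Q R S : Matrix (Fin k) (Fin k) ℂ)
    (φ ψ η ξ a b : ℝ)
    (hInt : ∀ m n : ℕ, IntegrableOn
      (gblKernel φ ψ η ξ R S a b (P + m • (1 : Matrix (Fin k) (Fin k) ℂ))
        (Q + n • (1 : Matrix (Fin k) (Fin k) ℂ))) (Set.Ioo 0 1)) :
    GBL φ ψ η ξ R S a b P Q =
      ∑' n : ℕ, GBL φ ψ η ξ R S a b (P + n • (1 : Matrix (Fin k) (Fin k) ℂ)) (Q + 1) := by
  have hshift (n : ℕ) : GBL φ ψ η ξ R S a b (P + n • 1) (Q + 1)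
      = ∫ x in Set.Ioo 0 1, (x ^ n * (1 - x)) • gblKernel φ ψ η ξ R S a b P Q x :=
    setIntegral_congr_fun measurableSet_Ioo
      fun x hx ↦ gblKernel_add_nsmul_one_add_one φ ψ η ξ R S a b P Q n hx
  simp only [hshift]
  refine integral_eq_tsum_integral_smul_of_hasSum_one (by simpa [IntegrableOn] using hInt 0 0)
    (fun n ↦ by fun_prop) ?_ ?_
  all_goals filter_upwards [ae_restrict_mem measurableSet_Ioo] with x hx
  · exact fun n ↦ mul_nonneg (pow_nonneg hx.1.le n) (sub_nonneg.2 hx.2.le)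
  · exact hasSum_pow_mul_one_sub hx.1.le hx.2

theorem GBL_infinite_sum_left {k : ℕ} (hk : 1 ≤ k) (P Q R S : Matrix (Fin k) (Fin k) ℂ)
    (hP : P.PosDef) (hQ : Q.PosDef) (hR : R.PosDef) (hS : S.PosDef)
    (φ ψ η ξ a b : ℝ) (hφ : 0 < φ) (hψ : 0 < ψ) (hη : 0 < η) (hξ : 0 < ξ)
    (ha : 0 < a) (hb : 0 < b)
    (hInt : ∀ m n : ℕ, IntegrableOn
      (gblKernel φ ψ η ξ R S a b (P + m • (1 : Matrix (Fin k) (Fin k) ℂ))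
        (Q + n • (1 : Matrix (Fin k) (Fin k) ℂ))) (Set.Ioo 0 1)) :
    GBL φ ψ η ξ R S a b P Q =
      ∑' n : ℕ, GBL φ ψ η ξ R S a b (P + n • (1 : Matrix (Fin k) (Fin k) ℂ)) (Q + 1) :=
  GBL_infinite_sum_left_general P Q R S φ ψ η ξ a b hInt

end
end

section
/- Let k ≥ 1, let P, Q, R, S be Hermitian positive definite k×k complex matrices, and let φ, ψ, η, ξ > 0 be real numbers. Then the generalized beta matrix function has the trigonometric integral representation B_{(φ,ψ)}^{(R,S,η,ξ)}(P,Q) = 2 ∫_0^{π/2} (sin θ)^{2P−I} (cos θ)^{2Q−I} E_{φ,ψ}(−R (csc θ)^{2η}) E_{φ,ψ}(−S (sec θ)^{2ξ}) dθ, obtained from the substitution x = sin²θ. -/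
open MeasureTheory Real
open scoped Matrix.Norms.L2Operator ComplexOrder

noncomputable section

/-! Substitute `x = sin² θ`, a strictly increasing bijection of `(0, π/2)` onto `(0, 1)` with
`dx = 2 sin θ cos θ dθ` and `1 - x = cos² θ`. The Jacobian factor `sin θ` is absorbed as
`sin θ • (sin² θ)^(P - I) = (sin θ)^(2P - I)`, since `2P - I = 2(P - I) + I` and `I` commutes with
everything; likewise for `cos θ` and `Q`. -/

section MatrixPower

variable {k : ℕ}

lemma mpow_add_of_commute (t : ℝ) {A B : Matrix (Fin k) (Fin k) ℂ} (h : Commute A B) :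
    mpow t (A + B) = mpow t A * mpow t B := by
  rw [mpow, smul_add, Matrix.exp_add_of_commute _ _ ((h.smul_left _).smul_right _), mpow, mpow]

lemma mpow_pow (t : ℝ) (n : ℕ) (A : Matrix (Fin k) (Fin k) ℂ) :
    mpow (t ^ n) A = mpow t (n • A) := by
  rw [mpow, mpow, Real.log_pow, ← Nat.cast_smul_eq_nsmul ℂ, smul_smul]
  push_cast
  rw [mul_comm]

lemma mpow_one {t : ℝ} (ht : 0 < t) : mpow t (1 : Matrix (Fin k) (Fin k) ℂ) = t • 1 := by
  rw [mpow, ← Algebra.algebraMap_eq_smul_one, ← NormedSpace.algebraMap_exp_comm,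
    Algebra.algebraMap_eq_smul_one, ← Complex.exp_eq_exp_ℂ, ← Complex.ofReal_exp,
    Real.exp_log ht, Complex.coe_smul]

lemma mpow_two_nsmul_sub_one {t : ℝ} (ht : 0 < t) (A : Matrix (Fin k) (Fin k) ℂ) :
    mpow t (2 • A - 1) = t • mpow (t ^ 2) (A - 1) := by
  have hsplit : 2 • A - 1 = 2 • (A - 1) + 1 := by module
  rw [hsplit, mpow_add_of_commute t (Commute.one_right _), mpow_one ht, mpow_pow,
    mul_smul_comm, mul_one]

end MatrixPower

lemma sin_pos_cos_pos_of_mem_Ioo {θ : ℝ} (hθ : θ ∈ Set.Ioo 0 (π / 2)) :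
    0 < sin θ ∧ 0 < cos θ :=
  ⟨sin_pos_of_pos_of_lt_pi hθ.1 (by linarith [hθ.2, pi_pos]),
    cos_pos_of_mem_Ioo ⟨by linarith [hθ.1, pi_pos], hθ.2⟩⟩

theorem setIntegral_Ioo_zero_one_eq_sin_sq {E : Type*} [NormedAddCommGroup E] [NormedSpace ℝ E]
    (g : ℝ → E) :
    ∫ x in Set.Ioo (0 : ℝ) 1, g x =
      ∫ θ in Set.Ioo 0 (π / 2), (2 * sin θ * cos θ) • g (sin θ ^ 2) := by
  have hmono : StrictMonoOn (fun θ : ℝ => sin θ ^ 2) (Set.Ioo 0 (π / 2)) := fun a ha b hb hab =>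
    pow_lt_pow_left₀ (strictMonoOn_sin ⟨by linarith [ha.1, pi_pos], ha.2.le⟩
      ⟨by linarith [hb.1, pi_pos], hb.2.le⟩ hab) (sin_pos_cos_pos_of_mem_Ioo ha).1.le two_ne_zero
  have himage : (fun θ => sin θ ^ 2) '' Set.Ioo 0 (π / 2) = Set.Ioo 0 1 := by
    refine subset_antisymm ?_ ?_
    · rintro _ ⟨θ, hθ, rfl⟩
      obtain ⟨hsin, hcos⟩ := sin_pos_cos_pos_of_mem_Ioo hθ
      exact ⟨by positivity, by nlinarith [sin_sq_add_cos_sq θ]⟩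
    · simpa using intermediate_value_Ioo pi_div_two_pos.le
        (by fun_prop : Continuous fun θ : ℝ => sin θ ^ 2).continuousOn
  have hderiv : ∀ θ ∈ Set.Ioo 0 (π / 2), HasDerivWithinAt (fun θ => sin θ ^ 2)
      (2 * sin θ * cos θ) (Set.Ioo 0 (π / 2)) θ := fun θ _ => by
    simpa [mul_assoc] using ((hasDerivAt_sin θ).fun_pow 2).hasDerivWithinAt
  rw [← himage, integral_image_eq_integral_abs_deriv_smul measurableSet_Ioo hderiv hmono.injOn]
  refine setIntegral_congr_fun measurableSet_Ioo fun θ hθ => ?_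
  obtain ⟨hsin, hcos⟩ := sin_pos_cos_pos_of_mem_Ioo hθ
  rw [abs_of_pos (by positivity)]

lemma sq_rpow_neg {t : ℝ} (ht : 0 ≤ t) (c : ℝ) : (t ^ 2) ^ (-c) = t ^ (-(2 * c)) := by
  rw [← rpow_natCast_mul ht]
  ring_nf

lemma two_mul_sin_mul_cos_smul_gblKernel_sin_sq {k : ℕ} (P Q R S : Matrix (Fin k) (Fin k) ℂ)
    (φ ψ η ξ : ℝ) {θ : ℝ} (hsin : 0 < sin θ) (hcos : 0 < cos θ) :
    (2 * sin θ * cos θ) • gblKernel φ ψ η ξ R S 1 1 P Q (sin θ ^ 2) =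
      (2 : ℝ) • (mpow (sin θ) (2 • P - 1) * mpow (cos θ) (2 • Q - 1) *
        mittagLeffler φ ψ ((-(sin θ ^ (-(2 * η))) : ℝ) • R) *
        mittagLeffler φ ψ ((-(cos θ ^ (-(2 * ξ))) : ℝ) • S)) := by
  rw [gblKernel, ← cos_sq', sq_rpow_neg hsin.le, sq_rpow_neg hcos.le,
    mpow_two_nsmul_sub_one hsin, mpow_two_nsmul_sub_one hcos]
  simp only [one_rpow, mul_one, one_smul, smul_mul_assoc, mul_smul_comm, smul_smul]
  congr 1
  ring

theorem GB_trig_integral_general {k : ℕ} (P Q R S : Matrix (Fin k) (Fin k) ℂ)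
    (φ ψ η ξ : ℝ) :
    GB φ ψ η ξ R S P Q =
      (2 : ℝ) • ∫ θ in Set.Ioo (0 : ℝ) (π / 2),
        (mpow (Real.sin θ) (2 • P - 1) * mpow (Real.cos θ) (2 • Q - 1) *
          mittagLeffler φ ψ ((-(Real.sin θ ^ (-(2 * η))) : ℝ) • R) *
          mittagLeffler φ ψ ((-(Real.cos θ ^ (-(2 * ξ))) : ℝ) • S)) := by
  rw [GB, GBL, setIntegral_Ioo_zero_one_eq_sin_sq, ← integral_smul]
  refine setIntegral_congr_fun measurableSet_Ioo fun θ hθ => ?_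
  obtain ⟨hsin, hcos⟩ := sin_pos_cos_pos_of_mem_Ioo hθ
  exact two_mul_sin_mul_cos_smul_gblKernel_sin_sq P Q R S φ ψ η ξ hsin hcos

theorem GB_trig_integral {k : ℕ} (hk : 1 ≤ k) (P Q R S : Matrix (Fin k) (Fin k) ℂ)
    (hP : P.PosDef) (hQ : Q.PosDef) (hR : R.PosDef) (hS : S.PosDef)
    (φ ψ η ξ : ℝ) (hφ : 0 < φ) (hψ : 0 < ψ) (hη : 0 < η) (hξ : 0 < ξ)
    (hInt : IntegrableOn (gblKernel φ ψ η ξ R S 1 1 P Q) (Set.Ioo 0 1)) :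
    GB φ ψ η ξ R S P Q =
      (2 : ℝ) • ∫ θ in Set.Ioo (0 : ℝ) (π / 2),
        (mpow (Real.sin θ) (2 • P - 1) * mpow (Real.cos θ) (2 • Q - 1) *
          mittagLeffler φ ψ ((-(Real.sin θ ^ (-(2 * η))) : ℝ) • R) *
          mittagLeffler φ ψ ((-(Real.cos θ ^ (-(2 * ξ))) : ℝ) • S)) :=
  GB_trig_integral_general P Q R S φ ψ η ξ

end
end
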